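/- arXiv:2010.09023 — 2 statements merged into one kernel-verified Lean document; each statement's English description precedes it below -/
import Mathlib

section
/- Local monotonicity: let ν, α, β > 0, γ ∈ (0,1), and define F(u) = ν A u + α B(u) − β c(u), where A u = −u'', B(u) = u u', c(u) = u(1−u)(u−γ). For r > 0 let B_r = {v ∈ H^1_0((0,1)) : ‖v‖_{L^∞} ≤ r}. Then for all u ∈ H^1_0((0,1)) and v ∈ B_r, ⟨F(u) − F(v), u − v⟩ + [α²r²/(2ν) + β(1+γ+γ²)] ‖u − v‖_{L²}² ≥ (ν/2) ‖∂ₓ(u − v)‖_{L²}² ≥ 0. -/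
/-!
Write `w = u - v`. Since `(u u' - v v') w + v w w' = (w³/3 + v w²)'` and `w` vanishes at both
endpoints, the Burgers term equals `-α ∫ v w w'`, which Young's inequality and `|v| ≤ r` bound
by `(ν/2) ‖w'‖² + (α² r² / 2ν) ‖w‖²`. For `c(s) = s (1 - s) (s - γ)` the difference quotient
`(c(A) - c(B)) / (A - B) = -(A² + AB + B²) + (1 + γ)(A + B) - γ` is at most
`(1 + γ)² / 3 - γ ≤ 1 + γ + γ²`, which bounds the reaction term.
-/

open MeasureTheory Real Set intervalIntegral

instance isFiniteMeasure_restrict_uIoc (a b : ℝ) :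
    IsFiniteMeasure (volume.restrict (uIoc a b)) :=
  isFiniteMeasure_restrict_Ioc _ _

section Derivative

variable {a b : ℝ} {u u' v v' : ℝ → ℝ}

theorem aestronglyMeasurable_of_forall_hasDerivAt
    (hu : ∀ x ∈ uIcc a b, HasDerivAt u (u' x) x) :
    AEStronglyMeasurable u' (volume.restrict (uIoc a b)) :=
  (measurable_deriv u).aestronglyMeasurable.congr <| by
    filter_upwards [ae_restrict_mem measurableSet_uIoc] with x hx
    exact (hu x (uIoc_subset_uIcc hx)).deriv

theorem memLp_two_of_forall_hasDerivAt (hu : ∀ x ∈ uIcc a b, HasDerivAt u (u' x) x)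
    (hu' : IntervalIntegrable (fun x => u' x ^ 2) volume a b) :
    MemLp u' 2 (volume.restrict (uIoc a b)) :=
  (memLp_two_iff_integrable_sq (aestronglyMeasurable_of_forall_hasDerivAt hu)).2
    (intervalIntegrable_iff.1 hu')

theorem intervalIntegrable_of_memLp_two {f : ℝ → ℝ}
    (hf : MemLp f 2 (volume.restrict (uIoc a b))) :
    IntervalIntegrable f volume a b :=
  intervalIntegrable_iff.2 (hf.integrable one_le_two)

theorem intervalIntegrable_sq_of_memLp_two {f : ℝ → ℝ}
    (hf : MemLp f 2 (volume.restrict (uIoc a b))) :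
    IntervalIntegrable (fun x => f x ^ 2) volume a b :=
  intervalIntegrable_iff.2 ((memLp_two_iff_integrable_sq hf.aestronglyMeasurable).1 hf)

theorem integral_convection_sub_mul_sub (hu : ∀ x ∈ uIcc a b, HasDerivAt u (u' x) x)
    (hv : ∀ x ∈ uIcc a b, HasDerivAt v (v' x) x) (hu' : IntervalIntegrable u' volume a b)
    (hv' : IntervalIntegrable v' volume a b) (ha : u a = v a) (hb : u b = v b) :
    ∫ x in a..b, (u x * u' x - v x * v' x) * (u x - v x) =
      -∫ x in a..b, v x * (u x - v x) * (u' x - v' x) := by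
  have hu_c := HasDerivAt.continuousOn hu
  have hv_c := HasDerivAt.continuousOn hv
  have hconv : IntervalIntegrable (fun x => (u x * u' x - v x * v' x) * (u x - v x)) volume a b :=
    ((hu'.continuousOn_mul (hu_c.mul (hu_c.sub hv_c))).sub
      (hv'.continuousOn_mul (hv_c.mul (hu_c.sub hv_c)))).congr fun x _ => by
        simp only [Pi.mul_apply, Pi.sub_apply]; ring
  have hcross : IntervalIntegrable (fun x => v x * (u x - v x) * (u' x - v' x)) volume a b :=
    (hu'.sub hv').continuousOn_mul (hv_c.mul (hu_c.sub hv_c))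
  have hderiv : ∀ x ∈ uIcc a b,
      HasDerivAt (fun y => (u y - v y) ^ 3 / 3 + v y * (u y - v y) ^ 2)
      ((u x * u' x - v x * v' x) * (u x - v x) + v x * (u x - v x) * (u' x - v' x)) x := by
    intro x hx
    have hw : HasDerivAt (fun y => u y - v y) (u' x - v' x) x := (hu x hx).sub (hv x hx)
    refine (((hw.pow 3).div_const 3).add ((hv x hx).mul (hw.pow 2))).congr_deriv ?_
    push_cast [Pi.pow_apply]
    ring
  have hsum := integral_eq_sub_of_hasDerivAt hderiv (hconv.add hcross)
  rw [integral_add hconv hcross, ha, hb] at hsum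
  simp only [sub_self] at hsum
  linarith

end Derivative

theorem mul_le_half_mul_sq_add_sq_div {ν : ℝ} (hν : 0 < ν) (p q : ℝ) :
    p * q ≤ ν / 2 * q ^ 2 + p ^ 2 / (2 * ν) := by
  have h : ν / 2 * q ^ 2 + p ^ 2 / (2 * ν) - p * q = (ν * q - p) ^ 2 / (2 * ν) := by
    field_simp
    ring
  have : 0 ≤ (ν * q - p) ^ 2 / (2 * ν) := by positivity
  linarith

theorem mul_integral_mul_mul_le_of_abs_le {a b ν r : ℝ} (α : ℝ) (hab : a ≤ b) (hν : 0 < ν)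
    {f g h : ℝ → ℝ} (hf : ∀ x ∈ Icc a b, |f x| ≤ r)
    (hfgh : IntervalIntegrable (fun x => f x * g x * h x) volume a b)
    (hg : IntervalIntegrable (fun x => g x ^ 2) volume a b)
    (hh : IntervalIntegrable (fun x => h x ^ 2) volume a b) :
    α * ∫ x in a..b, f x * g x * h x ≤
      ν / 2 * (∫ x in a..b, h x ^ 2) + α ^ 2 * r ^ 2 / (2 * ν) * ∫ x in a..b, g x ^ 2 := by
  have hpt : ∀ x ∈ Icc a b,
      α * (f x * g x * h x) ≤ ν / 2 * h x ^ 2 + α ^ 2 * r ^ 2 / (2 * ν) * g x ^ 2 := by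
    intro x hx
    have hfr : f x ^ 2 ≤ r ^ 2 := sq_le_sq.2 ((hf x hx).trans (le_abs_self r))
    calc α * (f x * g x * h x) = (α * f x * g x) * h x := by ring
      _ ≤ ν / 2 * h x ^ 2 + (α * f x * g x) ^ 2 / (2 * ν) :=
        mul_le_half_mul_sq_add_sq_div hν _ _
      _ = ν / 2 * h x ^ 2 + α ^ 2 * g x ^ 2 / (2 * ν) * f x ^ 2 := by ring
      _ ≤ ν / 2 * h x ^ 2 + α ^ 2 * g x ^ 2 / (2 * ν) * r ^ 2 := by gcongr
      _ = ν / 2 * h x ^ 2 + α ^ 2 * r ^ 2 / (2 * ν) * g x ^ 2 := by ring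
  rw [← intervalIntegral.integral_const_mul, ← intervalIntegral.integral_const_mul,
    ← intervalIntegral.integral_const_mul, ← integral_add (hh.const_mul _) (hg.const_mul _)]
  exact integral_mono_on hab (hfgh.const_mul α) ((hh.const_mul _).add (hg.const_mul _)) hpt

theorem nagumo_sub_mul_sub_le (γ A B : ℝ) :
    (A * (1 - A) * (A - γ) - B * (1 - B) * (B - γ)) * (A - B) ≤
      (1 + γ + γ ^ 2) * (A - B) ^ 2 :=
  calc (A * (1 - A) * (A - γ) - B * (1 - B) * (B - γ)) * (A - B)
      = (1 + γ + γ ^ 2) * (A - B) ^ 2 -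
          (A - B) ^ 2 * ((A + B - (1 + γ)) ^ 2 + A ^ 2 + B ^ 2 + (1 + γ) ^ 2) / 2 := by ring
    _ ≤ (1 + γ + γ ^ 2) * (A - B) ^ 2 := sub_le_self _ (by positivity)

theorem stmt8_general (ν α β γ r : ℝ) (hν : 0 < ν) (hβ : 0 < β)
    (u u' v v' : ℝ → ℝ)
    (hu : ∀ x ∈ Icc (0:ℝ) 1, HasDerivAt u (u' x) x)
    (hu0 : u 0 = 0) (hu1 : u 1 = 0)
    (hu'L2 : IntervalIntegrable (fun x => u' x ^ 2) volume 0 1)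
    (hv : ∀ x ∈ Icc (0:ℝ) 1, HasDerivAt v (v' x) x)
    (hv0 : v 0 = 0) (hv1 : v 1 = 0)
    (hv'L2 : IntervalIntegrable (fun x => v' x ^ 2) volume 0 1)
    (hvr : ∀ x ∈ Icc (0:ℝ) 1, |v x| ≤ r) :
    (ν / 2) * (∫ x in (0:ℝ)..1, (u' x - v' x) ^ 2) ≤
      (ν * (∫ x in (0:ℝ)..1, (u' x - v' x) ^ 2)
        + α * (∫ x in (0:ℝ)..1, (u x * u' x - v x * v' x) * (u x - v x))
        - β * (∫ x in (0:ℝ)..1,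
            (u x * (1 - u x) * (u x - γ) - v x * (1 - v x) * (v x - γ)) * (u x - v x)))
        + (α ^ 2 * r ^ 2 / (2 * ν) + β * (1 + γ + γ ^ 2)) *
            ∫ x in (0:ℝ)..1, (u x - v x) ^ 2 ∧
    0 ≤ (ν / 2) * ∫ x in (0:ℝ)..1, (u' x - v' x) ^ 2 := by
  rw [← uIcc_of_le zero_le_one] at hu hv
  have hU := memLp_two_of_forall_hasDerivAt hu hu'L2
  have hV := memLp_two_of_forall_hasDerivAt hv hv'L2
  have hu_c := HasDerivAt.continuousOn hu
  have hv_c := HasDerivAt.continuousOn hv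
  have hw2 : IntervalIntegrable (fun x => (u x - v x) ^ 2) volume 0 1 :=
    ((hu_c.sub hv_c).pow 2).intervalIntegrable
  have hconv := mul_integral_mul_mul_le_of_abs_le α zero_le_one hν hvr
    (g := fun x => u x - v x) (h := fun x => u' x - v' x)
    ((intervalIntegrable_of_memLp_two (hU.sub hV)).continuousOn_mul
      (hv_c.mul (hu_c.sub hv_c)))
    hw2 (intervalIntegrable_sq_of_memLp_two (hU.sub hV))
  have hreact : ∫ x in (0:ℝ)..1,
      (u x * (1 - u x) * (u x - γ) - v x * (1 - v x) * (v x - γ)) * (u x - v x) ≤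
        (1 + γ + γ ^ 2) * ∫ x in (0:ℝ)..1, (u x - v x) ^ 2 := by
    rw [← intervalIntegral.integral_const_mul]
    refine integral_mono_on zero_le_one (ContinuousOn.intervalIntegrable ?_) (hw2.const_mul _)
      fun x _ => nagumo_sub_mul_sub_le γ (u x) (v x)
    fun_prop
  rw [integral_convection_sub_mul_sub hu hv (intervalIntegrable_of_memLp_two hU)
    (intervalIntegrable_of_memLp_two hV) (hu0.trans hv0.symm) (hu1.trans hv1.symm)]
  have hI : 0 ≤ ∫ x in (0:ℝ)..1, (u' x - v' x) ^ 2 :=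
    integral_nonneg zero_le_one fun x _ => sq_nonneg _
  constructor
  · linarith [mul_le_mul_of_nonneg_left hreact hβ.le]
  · positivity

/-- Local monotonicity of `F(u) = νAu + αB(u) − βc(u)`: for `u ∈ H¹₀((0,1))` and
`v ∈ B_r = {v : ‖v‖_∞ ≤ r}`,
`⟨F(u) − F(v), u − v⟩ + [α²r²/(2ν) + β(1+γ+γ²)]‖u−v‖_{L²}² ≥ (ν/2)‖∂ₓ(u−v)‖_{L²}² ≥ 0`,
where `⟨F(u)−F(v), u−v⟩ = ν∫(u'−v')² + α∫(uu'−vv')(u−v) − β∫(c(u)−c(v))(u−v)`. -/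
theorem stmt8 (ν α β γ r : ℝ) (hν : 0 < ν) (hα : 0 < α) (hβ : 0 < β)
    (hγ : γ ∈ Ioo (0:ℝ) 1) (hr : 0 < r)
    (u u' v v' : ℝ → ℝ)
    (hu : ∀ x ∈ Icc (0:ℝ) 1, HasDerivAt u (u' x) x)
    (hu0 : u 0 = 0) (hu1 : u 1 = 0)
    (hu'L2 : IntervalIntegrable (fun x => u' x ^ 2) volume 0 1)
    (hv : ∀ x ∈ Icc (0:ℝ) 1, HasDerivAt v (v' x) x)
    (hv0 : v 0 = 0) (hv1 : v 1 = 0)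
    (hv'L2 : IntervalIntegrable (fun x => v' x ^ 2) volume 0 1)
    (hvr : ∀ x ∈ Icc (0:ℝ) 1, |v x| ≤ r) :
    (ν / 2) * (∫ x in (0:ℝ)..1, (u' x - v' x) ^ 2) ≤
      (ν * (∫ x in (0:ℝ)..1, (u' x - v' x) ^ 2)
        + α * (∫ x in (0:ℝ)..1, (u x * u' x - v x * v' x) * (u x - v x))
        - β * (∫ x in (0:ℝ)..1,
            (u x * (1 - u x) * (u x - γ) - v x * (1 - v x) * (v x - γ)) * (u x - v x)))
        + (α ^ 2 * r ^ 2 / (2 * ν) + β * (1 + γ + γ ^ 2)) *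
            ∫ x in (0:ℝ)..1, (u x - v x) ^ 2 ∧
    0 ≤ (ν / 2) * ∫ x in (0:ℝ)..1, (u' x - v' x) ^ 2 :=
  stmt8_general ν α β γ r hν hβ u u' v v' hu hu0 hu1 hu'L2 hv hv0 hv1 hv'L2 hvr
end

section
/- Monotonicity of the Huxley operator: with F(u) = ν A u − β c(u) (i.e. α = 0), for all u, v ∈ H^1_0((0,1)), ⟨F(u) − F(v), u − v⟩ + β(1+γ+γ²)‖u − v‖_{L²}² ≥ ν‖∂ₓ(u−v)‖_{L²}² ≥ 0; in particular F + λI with λ = β(1+γ+γ²) is a monotone operator from H^1_0((0,1)) to H^{-1}((0,1)). -/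
open MeasureTheory Real Set

/-- Monotonicity of the Huxley operator `F(u) = νAu − βc(u)` (the case `α = 0`):
for all `u, v ∈ H¹₀((0,1))`,
`⟨F(u) − F(v), u − v⟩ + β(1+γ+γ²)‖u−v‖_{L²}² ≥ ν‖∂ₓ(u−v)‖_{L²}² ≥ 0`,
where `⟨F(u)−F(v), u−v⟩ = ν∫(u'−v')² − β∫(c(u)−c(v))(u−v)`; in particular
`F + β(1+γ+γ²)I` is monotone. -/
theorem stmt9 (ν β γ : ℝ) (hν : 0 < ν) (hβ : 0 < β) (hγ : γ ∈ Ioo (0:ℝ) 1)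
    (u u' v v' : ℝ → ℝ)
    (hu : ∀ x ∈ Icc (0:ℝ) 1, HasDerivAt u (u' x) x)
    (hu0 : u 0 = 0) (hu1 : u 1 = 0)
    (hu'L2 : IntervalIntegrable (fun x => u' x ^ 2) volume 0 1)
    (hv : ∀ x ∈ Icc (0:ℝ) 1, HasDerivAt v (v' x) x)
    (hv0 : v 0 = 0) (hv1 : v 1 = 0)
    (hv'L2 : IntervalIntegrable (fun x => v' x ^ 2) volume 0 1) :
    (ν * (∫ x in (0:ℝ)..1, (u' x - v' x) ^ 2) ≤
      (ν * (∫ x in (0:ℝ)..1, (u' x - v' x) ^ 2)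
        - β * (∫ x in (0:ℝ)..1,
            (u x * (1 - u x) * (u x - γ) - v x * (1 - v x) * (v x - γ)) * (u x - v x)))
        + β * (1 + γ + γ ^ 2) * ∫ x in (0:ℝ)..1, (u x - v x) ^ 2) ∧
    (0 ≤ ν * ∫ x in (0:ℝ)..1, (u' x - v' x) ^ 2) ∧
    (0 ≤ (ν * (∫ x in (0:ℝ)..1, (u' x - v' x) ^ 2)
        - β * (∫ x in (0:ℝ)..1,
            (u x * (1 - u x) * (u x - γ) - v x * (1 - v x) * (v x - γ)) * (u x - v x)))
        + β * (1 + γ + γ ^ 2) * ∫ x in (0:ℝ)..1, (u x - v x) ^ 2) := by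
  -- continuity of u, v on [0,1]
  have hcu : ContinuousOn u (Icc (0:ℝ) 1) := fun x hx =>
    ((hu x hx).continuousAt).continuousWithinAt
  have hcv : ContinuousOn v (Icc (0:ℝ) 1) := fun x hx =>
    ((hv x hx).continuousAt).continuousWithinAt
  have huIcc : uIcc (0:ℝ) 1 = Icc (0:ℝ) 1 := uIcc_of_le (by norm_num)
  have hg : IntervalIntegrable
      (fun x => (u x * (1 - u x) * (u x - γ) - v x * (1 - v x) * (v x - γ)) * (u x - v x))
      volume 0 1 := by
    apply ContinuousOn.intervalIntegrable
    rw [huIcc]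
    fun_prop (disch := assumption)
  have hd2 : IntervalIntegrable (fun x => (u x - v x) ^ 2) volume 0 1 := by
    apply ContinuousOn.intervalIntegrable
    rw [huIcc]
    fun_prop (disch := assumption)
  -- key pointwise inequality
  have key : 0 ≤ (1 + γ + γ ^ 2) * (∫ x in (0:ℝ)..1, (u x - v x) ^ 2)
      - ∫ x in (0:ℝ)..1,
        (u x * (1 - u x) * (u x - γ) - v x * (1 - v x) * (v x - γ)) * (u x - v x) := by
    have hpt : ∀ x ∈ Icc (0:ℝ) 1, 0 ≤
        (1 + γ + γ ^ 2) * (u x - v x) ^ 2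
          - (u x * (1 - u x) * (u x - γ) - v x * (1 - v x) * (v x - γ)) * (u x - v x) := by
      intro x _
      nlinarith [sq_nonneg ((u x - v x) * (2 * u x + v x - (1 + γ))),
        sq_nonneg ((u x - v x) * (3 * v x - (1 + γ))),
        sq_nonneg ((u x - v x) * (1 + γ))]
    have := intervalIntegral.integral_nonneg (μ := volume) (f := fun x =>
        (1 + γ + γ ^ 2) * (u x - v x) ^ 2
          - (u x * (1 - u x) * (u x - γ) - v x * (1 - v x) * (v x - γ)) * (u x - v x))
      (by norm_num : (0:ℝ) ≤ 1) hpt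
    rwa [intervalIntegral.integral_sub (hd2.const_mul _) hg,
      intervalIntegral.integral_const_mul] at this
  have h1 : 0 ≤ ν * ∫ x in (0:ℝ)..1, (u' x - v' x) ^ 2 := by
    apply mul_nonneg hν.le
    exact intervalIntegral.integral_nonneg (by norm_num) (fun x _ => sq_nonneg _)
  refine ⟨by nlinarith, h1, by nlinarith⟩
end
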